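/- Under the hypotheses of the flat ergoregion energy model (Ω ⊆ ℝⁿ open bounded with n ≥ 2; closedBall(p,R) ⊆ Ω with R > 0; ρ smooth, compactly supported in Ω, equal to 1 on closedBall(p,R); μ, α, G measurable with 0 < μ₀ ≤ μ ≤ μ₁, 1 ≤ α ≤ α₁ and |G| ≤ L on Ω, α ≥ 1 + ε > 1 on closedBall(p,R); h : ℝ → ℝ continuous; φ_m(x) = ρ(x)·sin(m·x₁); E(m) = ∫_Ω (1/μ(x))·[ (1/2)·G(x)·h(φ_m(x)) + (1 − α(x))·(∂₁φ_m(x))² + Σ_{j=2}^{n} (∂_j φ_m(x))² ] dx), for every real number S there exists a natural number M such that E(m) < S for all m ≥ M. In particular there exist compactly supported data φ_m with strictly negative energy E(m) < 0. -/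

import Mathlib

open MeasureTheory Filter Topology

open Real Complex in
lemma aux_cos_tendsto {n : ℕ} (p : EuclideanSpace ℝ (Fin n)) (R : ℝ) (i : Fin n) :
    Tendsto (fun m : ℕ => ∫ x in Metric.closedBall p R, Real.cos (2 * m * x i)) atTop (𝓝 0) := by
  set f : (EuclideanSpace ℝ (Fin n)) → ℂ := (Metric.closedBall p R).indicator (fun _ => 1) with hf
  have hRL := tendsto_integral_exp_inner_smul_cocompact (f := f)
  set w : ℕ → (EuclideanSpace ℝ (Fin n)) := fun m => EuclideanSpace.single i (-(m : ℝ)/π) with hw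
  have hwten : Tendsto w atTop (cocompact (EuclideanSpace ℝ (Fin n))) := by
    rw [← Metric.cobounded_eq_cocompact, ← comap_norm_atTop, tendsto_comap_iff]
    have : (norm ∘ w) = fun m : ℕ => (m : ℝ)/π := by
      funext m
      show ‖EuclideanSpace.single i (-(m:ℝ)/π)‖ = _
      rw [EuclideanSpace.norm_single, Real.norm_eq_abs, abs_div, abs_neg, Nat.abs_cast,
        _root_.abs_of_nonneg Real.pi_pos.le]
    rw [this]
    exact (tendsto_natCast_atTop_atTop).atTop_div_const Real.pi_pos
  have hcomp := hRL.comp hwten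
  have key : ∀ m : ℕ, (∫ v : (EuclideanSpace ℝ (Fin n)), Real.fourierChar (-(inner ℝ v (w m) : ℝ)) • f v) =
      ∫ x in Metric.closedBall p R, Complex.exp ((2 * m * x i : ℝ) * Complex.I) := by
    intro m
    have hpt : ∀ v : (EuclideanSpace ℝ (Fin n)), Real.fourierChar (-(inner ℝ v (w m) : ℝ)) • f v =
        (Metric.closedBall p R).indicator
          (fun x : (EuclideanSpace ℝ (Fin n)) => Complex.exp ((2 * m * x i : ℝ) * Complex.I)) v := by
      intro v
      rw [hf]
      by_cases hv : v ∈ Metric.closedBall p R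
      · simp only [Set.indicator_of_mem hv, smul_eq_mul, mul_one, Circle.smul_def,
          Real.fourierChar_apply]
        congr 1
        have hin : (inner ℝ v (w m) : ℝ) = (-(m:ℝ)/π) * v i := by
          show (inner ℝ v (EuclideanSpace.single i (-(m:ℝ)/π)) : ℝ) = _
          rw [EuclideanSpace.inner_single_right]
          simp [mul_comm]
        rw [hin]
        push_cast
        have hπ : (π : ℂ) ≠ 0 := by exact_mod_cast Real.pi_ne_zero
        field_simp
      · simp [Set.indicator_of_notMem hv]
    simp_rw [hpt]
    rw [integral_indicator measurableSet_closedBall]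
  simp_rw [Function.comp_def, key] at hcomp
  have hre := (Complex.continuous_re.tendsto 0).comp hcomp
  simp only [Function.comp_def, Complex.zero_re] at hre
  have hint : ∀ m : ℕ, IntegrableOn
      (fun x : (EuclideanSpace ℝ (Fin n)) => Complex.exp ((2 * m * x i : ℝ) * Complex.I))
      (Metric.closedBall p R) volume := by
    intro m
    apply ContinuousOn.integrableOn_compact (isCompact_closedBall _ _)
    exact (Complex.continuous_exp.comp ((Complex.continuous_ofReal.comp
      (continuous_const.mul (EuclideanSpace.proj i).continuous)).mul continuous_const)).continuousOn
  have heq : ∀ m : ℕ, (∫ x in Metric.closedBall p R,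
      Complex.exp ((2 * m * x i : ℝ) * Complex.I)).re =
      ∫ x in Metric.closedBall p R, Real.cos (2 * m * x i) := by
    intro m
    rw [← RCLike.re_eq_complex_re, ← integral_re (hint m)]
    congr 1; funext x
    rw [RCLike.re_eq_complex_re, Complex.exp_ofReal_mul_I_re]
  simp only [heq] at hre
  exact hre


lemma aux_fderiv_mul_sin {n : ℕ} (ρ : EuclideanSpace ℝ (Fin n) → ℝ) (hρ : ContDiff ℝ (⊤ : ℕ∞) ρ)
    (i : Fin n) (m : ℝ) (x v : EuclideanSpace ℝ (Fin n)) :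
    fderiv ℝ (fun y => ρ y * Real.sin (m * y i)) x v
      = fderiv ℝ ρ x v * Real.sin (m * x i) + ρ x * (m * Real.cos (m * x i)) * v i := by
  have h1 : HasFDerivAt ρ (fderiv ℝ ρ x) x := (hρ.differentiable (by simp) x).hasFDerivAt
  have hproj : HasFDerivAt (fun y : EuclideanSpace ℝ (Fin n) => y i)
      (EuclideanSpace.proj i : EuclideanSpace ℝ (Fin n) →L[ℝ] ℝ) x :=
    by
      have : ⇑(EuclideanSpace.proj (𝕜 := ℝ) i) = fun y : EuclideanSpace ℝ (Fin n) => y i := by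
        funext y; simp
      rw [← this]
      apply ContinuousLinearMap.hasFDerivAt
  have h2 : HasFDerivAt (fun y : EuclideanSpace ℝ (Fin n) => m * y i)
      (m • (EuclideanSpace.proj i : EuclideanSpace ℝ (Fin n) →L[ℝ] ℝ)) x := hproj.const_mul m
  have h3 : HasDerivAt Real.sin (Real.cos (m * x i)) (m * x i) := Real.hasDerivAt_sin _
  have h4 : HasFDerivAt (fun y : EuclideanSpace ℝ (Fin n) => Real.sin (m * y i))
      (Real.cos (m * x i) • (m • (EuclideanSpace.proj i : EuclideanSpace ℝ (Fin n) →L[ℝ] ℝ))) x :=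
    by have := h3.comp_hasFDerivAt x h2; exact this
  have h5 : HasFDerivAt (fun y => ρ y * Real.sin (m * y i)) _ x := h1.mul h4
  rw [h5.fderiv]
  simp only [ContinuousLinearMap.add_apply, ContinuousLinearMap.smul_apply, smul_eq_mul]
  have hv : (EuclideanSpace.proj (𝕜 := ℝ) i) v = v i := rfl
  rw [hv]; ring


set_option maxHeartbeats 2000000 in
/-- For every real `S` there is a frequency threshold `M` such that the energy
`E m` of the data `φ_m(x) = ρ(x) sin(m x₁)` satisfies `E m < S` for all `m ≥ M`;
in particular there are compactly supported data with strictly negative energy. -/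
theorem ergoregion_energy_eventually_lt (n : ℕ) (hn : 2 ≤ n)
    (Ω : Set (EuclideanSpace ℝ (Fin n)))
    (hΩopen : IsOpen Ω) (hΩbdd : Bornology.IsBounded Ω)
    (p : EuclideanSpace ℝ (Fin n)) (R : ℝ) (hR : 0 < R)
    (hball : Metric.closedBall p R ⊆ Ω)
    (ρ : EuclideanSpace ℝ (Fin n) → ℝ) (hρ : ContDiff ℝ (⊤ : ℕ∞) ρ)
    (hρcpt : HasCompactSupport ρ) (hρsupp : tsupport ρ ⊆ Ω)
    (hρ1 : ∀ x ∈ Metric.closedBall p R, ρ x = 1)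
    (μ α G : EuclideanSpace ℝ (Fin n) → ℝ)
    (hμmeas : Measurable μ) (hαmeas : Measurable α) (hGmeas : Measurable G)
    (μ₀ μ₁ α₁ L ε : ℝ)
    (hμ₀ : 0 < μ₀) (hμ₁ : 0 < μ₁) (hα₁ : 0 < α₁) (hL : 0 < L) (hε : 0 < ε)
    (hμbound : ∀ x ∈ Ω, μ₀ ≤ μ x ∧ μ x ≤ μ₁)
    (hαbound : ∀ x ∈ Ω, 1 ≤ α x ∧ α x ≤ α₁)
    (hGbound : ∀ x ∈ Ω, |G x| ≤ L)
    (hαball : ∀ x ∈ Metric.closedBall p R, 1 + ε ≤ α x)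
    (h : ℝ → ℝ) (hh : Continuous h)
    (φ : ℕ → EuclideanSpace ℝ (Fin n) → ℝ)
    (hφ : ∀ m x, φ m x = ρ x * Real.sin (m * x ⟨0, by omega⟩))
    (E : ℕ → ℝ)
    (hE : ∀ m, E m = ∫ x in Ω, (1 / μ x) *
      ((1 / 2) * G x * h (φ m x)
        + (1 - α x) * (fderiv ℝ (φ m) x (EuclideanSpace.single ⟨0, by omega⟩ 1)) ^ 2
        + ∑ j ∈ Finset.univ.erase (⟨0, by omega⟩ : Fin n),
            (fderiv ℝ (φ m) x (EuclideanSpace.single j 1)) ^ 2)) :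
    (∀ S : ℝ, ∃ M : ℕ, ∀ m ≥ M, E m < S) ∧ (∃ m : ℕ, E m < 0) := by
  have hn0 : 0 < n := by omega
  set i0 : Fin n := ⟨0, hn0⟩ with hi0def
  have hΩmeas : MeasurableSet Ω := hΩopen.measurableSet
  have hΩvol : volume Ω < ⊤ := hΩbdd.measure_lt_top
  -- function rewriting
  have hφm : ∀ m : ℕ, φ m = fun y => ρ y * Real.sin ((m : ℝ) * y i0) := fun m => funext (hφ m)
  -- derivative notation
  set D : ℕ → Fin n → EuclideanSpace ℝ (Fin n) → ℝ :=
    fun m j x => fderiv ℝ (φ m) x (EuclideanSpace.single j 1) with hDdef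
  have hDeq : ∀ (m : ℕ) (j : Fin n) (x : EuclideanSpace ℝ (Fin n)),
      D m j x = fderiv ℝ ρ x (EuclideanSpace.single j 1) * Real.sin (m * x i0)
        + ρ x * ((m : ℝ) * Real.cos (m * x i0)) *
            (EuclideanSpace.single j (1:ℝ) : EuclideanSpace ℝ (Fin n)) i0 := by
    intro m j x
    show fderiv ℝ (φ m) x (EuclideanSpace.single j 1) = _
    rw [hφm m]
    exact aux_fderiv_mul_sin ρ hρ i0 m x _
  -- bounds
  obtain ⟨C, hC⟩ := (hρcpt.fderiv ℝ).exists_bound_of_continuous (hρ.continuous_fderiv (by simp))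
  obtain ⟨Cρ, hCρ⟩ := hρcpt.exists_bound_of_continuous hρ.continuous
  have hC0 : 0 ≤ C := le_trans (norm_nonneg _) (hC 0)
  have hCρ0 : 0 ≤ Cρ := le_trans (norm_nonneg _) (hCρ 0)
  obtain ⟨H, hH⟩ := (isCompact_Icc (a := -Cρ) (b := Cρ)).exists_bound_of_continuousOn
    hh.continuousOn
  have hH0 : 0 ≤ H := le_trans (norm_nonneg _) (hH 0 (by constructor <;> linarith))
  have hφbd : ∀ (m : ℕ) x, |φ m x| ≤ Cρ := by
    intro m x
    rw [hφ m x]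
    calc |ρ x * Real.sin (m * x ⟨0, hn0⟩)| = |ρ x| * |Real.sin (m * x ⟨0, hn0⟩)| := abs_mul _ _
    _ ≤ Cρ * 1 := by
        apply mul_le_mul (hCρ x) (Real.abs_sin_le_one _) (abs_nonneg _) hCρ0
    _ = Cρ := mul_one _
  have hhbd : ∀ (m : ℕ) x, |h (φ m x)| ≤ H := by
    intro m x
    exact hH _ (abs_le.mp (hφbd m x))
  have hfder : ∀ x (j : Fin n), |fderiv ℝ ρ x (EuclideanSpace.single j 1)| ≤ C := by
    intro x j
    calc |fderiv ℝ ρ x (EuclideanSpace.single j 1)|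
        ≤ ‖fderiv ℝ ρ x‖ * ‖(EuclideanSpace.single j (1:ℝ) : EuclideanSpace ℝ (Fin n))‖ :=
          (fderiv ℝ ρ x).le_opNorm _
    _ = ‖fderiv ℝ ρ x‖ := by rw [EuclideanSpace.norm_single]; simp
    _ ≤ C := hC x
  have hsingle_ne : ∀ j : Fin n, j ≠ i0 →
      (EuclideanSpace.single j (1:ℝ) : EuclideanSpace ℝ (Fin n)) i0 = 0 := by
    intro j hj
    rw [EuclideanSpace.single_apply]
    simp [Ne.symm hj]
  have hsingle_eq : (EuclideanSpace.single i0 (1:ℝ) : EuclideanSpace ℝ (Fin n)) i0 = 1 := by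
    rw [EuclideanSpace.single_apply]; simp
  have hDj : ∀ (m : ℕ) x (j : Fin n), j ≠ i0 → |D m j x| ≤ C := by
    intro m x j hj
    rw [hDeq, hsingle_ne j hj, mul_zero, add_zero, abs_mul]
    calc |fderiv ℝ ρ x (EuclideanSpace.single j 1)| * |Real.sin (m * x i0)| ≤ C * 1 :=
      mul_le_mul (hfder x j) (Real.abs_sin_le_one _) (abs_nonneg _) hC0
    _ = C := mul_one _
  have hD0 : ∀ (m : ℕ) x, |D m i0 x| ≤ C + Cρ * m := by
    intro m x
    rw [hDeq, hsingle_eq, mul_one]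
    refine le_trans (abs_add_le _ _) ?_
    rw [abs_mul, abs_mul]
    have h1 : |fderiv ℝ ρ x (EuclideanSpace.single i0 1)| * |Real.sin (m * x i0)| ≤ C * 1 :=
      mul_le_mul (hfder x i0) (Real.abs_sin_le_one _) (abs_nonneg _) hC0
    have h2 : |ρ x| * |(m : ℝ) * Real.cos (m * x i0)| ≤ Cρ * m := by
      rw [abs_mul]
      have : |(m:ℝ)| * |Real.cos (m * x i0)| ≤ m * 1 := by
        apply mul_le_mul (le_of_eq (abs_of_nonneg (Nat.cast_nonneg m)))
          (Real.abs_cos_le_one _) (abs_nonneg _) (Nat.cast_nonneg m)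
      calc |ρ x| * (|(m:ℝ)| * |Real.cos (m * x i0)|) ≤ Cρ * (m * 1) :=
        mul_le_mul (hCρ x) this (by positivity) hCρ0
      _ = Cρ * m := by ring
    linarith
  -- the two pieces of the integrand
  set a : ℕ → EuclideanSpace ℝ (Fin n) → ℝ := fun m x => (1 / μ x) *
      ((1 / 2) * G x * h (φ m x) + ∑ j ∈ Finset.univ.erase i0, (D m j x) ^ 2) with hadef
  set b : ℕ → EuclideanSpace ℝ (Fin n) → ℝ := fun m x => (1 / μ x) *
      ((1 - α x) * (D m i0 x) ^ 2) with hbdef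
  -- continuity of D
  have hDcont : ∀ (m : ℕ) (j : Fin n), Continuous (D m j) := by
    intro m j
    have : D m j = fun x => fderiv ℝ ρ x (EuclideanSpace.single j 1) * Real.sin (m * x i0)
        + ρ x * ((m : ℝ) * Real.cos (m * x i0)) *
            (EuclideanSpace.single j (1:ℝ) : EuclideanSpace ℝ (Fin n)) i0 :=
      funext fun x => hDeq m j x
    rw [this]
    have hxcont : Continuous fun x : EuclideanSpace ℝ (Fin n) => x i0 :=
      (EuclideanSpace.proj (𝕜 := ℝ) i0).continuous
    exact (((hρ.continuous_fderiv (by simp)).clm_apply continuous_const).mul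
        (Real.continuous_sin.comp (continuous_const.mul hxcont))).add
      ((hρ.continuous.mul (continuous_const.mul
        (Real.continuous_cos.comp (continuous_const.mul hxcont)))).mul continuous_const)
  have hφcont : ∀ m : ℕ, Continuous (φ m) := by
    intro m
    rw [hφm m]
    exact hρ.continuous.mul (Real.continuous_sin.comp (continuous_const.mul
      (EuclideanSpace.proj (𝕜 := ℝ) i0).continuous))
  -- integrability helper
  have hIntHelp : ∀ (f : EuclideanSpace ℝ (Fin n) → ℝ) (B : ℝ), Measurable f →
      (∀ x ∈ Ω, |f x| ≤ B) → IntegrableOn f Ω volume := by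
    intro f B hf hB
    refine Integrable.mono' (g := fun _ => B)
      (integrableOn_const hΩvol.ne) hf.aestronglyMeasurable ?_
    rw [ae_restrict_iff' hΩmeas]
    exact ae_of_all _ hB
  have hmeas_a : ∀ m, Measurable (a m) := by
    intro m
    apply (measurable_const.div hμmeas).mul
    apply Measurable.add
    · exact ((measurable_const.mul hGmeas).mul ((hh.comp (hφcont m)).measurable))
    · exact Finset.measurable_sum _ fun j _ => ((hDcont m j).measurable).pow_const 2
  have hmeas_b : ∀ m, Measurable (b m) := by
    intro m
    exact (measurable_const.div hμmeas).mul
      ((measurable_const.sub hαmeas).mul (((hDcont m i0).measurable).pow_const 2))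
  set A : ℝ := (1 / μ₀) * ((1/2) * L * H + n * C ^ 2) with hAdef
  have hmu_inv : ∀ x ∈ Ω, 0 < μ x ∧ 1 / μ x ≤ 1 / μ₀ := by
    intro x hx
    have h1 := (hμbound x hx).1
    exact ⟨lt_of_lt_of_le hμ₀ h1, one_div_le_one_div_of_le hμ₀ h1⟩
  have hbound_a : ∀ m, ∀ x ∈ Ω, |a m x| ≤ A := by
    intro m x hx
    obtain ⟨hμx, hμinv⟩ := hmu_inv x hx
    rw [hadef]
    simp only
    rw [abs_mul]
    have hsum_nonneg : (0:ℝ) ≤ ∑ j ∈ Finset.univ.erase i0, (D m j x) ^ 2 :=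
      Finset.sum_nonneg fun j _ => sq_nonneg _
    have hsum_le : ∑ j ∈ Finset.univ.erase i0, (D m j x) ^ 2 ≤ n * C ^ 2 := by
      calc ∑ j ∈ Finset.univ.erase i0, (D m j x) ^ 2
          ≤ ∑ _j ∈ Finset.univ.erase i0, C ^ 2 := by
            apply Finset.sum_le_sum
            intro j hj
            have hj' : j ≠ i0 := Finset.ne_of_mem_erase hj
            exact sq_le_sq' (by linarith [abs_le.mp (hDj m x j hj')])
              (abs_le.mp (hDj m x j hj')).2
      _ = (Finset.univ.erase i0).card * C ^ 2 := by rw [Finset.sum_const, nsmul_eq_mul]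
      _ ≤ n * C ^ 2 := by
          apply mul_le_mul_of_nonneg_right _ (sq_nonneg C)
          have := Finset.card_erase_le (s := (Finset.univ : Finset (Fin n))) (a := i0)
          have h2 : ((Finset.univ : Finset (Fin n)).card : ℝ) = n := by simp
          exact_mod_cast le_trans (Nat.cast_le.mpr this) (le_of_eq h2)
    have hG : |G x| ≤ L := hGbound x hx
    have habs2 : |(1/2) * G x * h (φ m x) + ∑ j ∈ Finset.univ.erase i0, (D m j x) ^ 2|
        ≤ (1/2) * L * H + n * C ^ 2 := by
      refine le_trans (abs_add_le _ _) ?_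
      have e1 : |(1/2) * G x * h (φ m x)| ≤ (1/2) * L * H := by
        rw [abs_mul, abs_mul]
        have : |(1/2 : ℝ)| = 1/2 := by norm_num
        rw [this]
        have : |G x| * |h (φ m x)| ≤ L * H :=
          mul_le_mul hG (hhbd m x) (abs_nonneg _) hL.le
        calc (1/2) * |G x| * |h (φ m x)| = (1/2) * (|G x| * |h (φ m x)|) := by ring
        _ ≤ (1/2) * (L * H) := by linarith
        _ = (1/2) * L * H := by ring
      have e2 : |∑ j ∈ Finset.univ.erase i0, (D m j x) ^ 2| ≤ n * C ^ 2 := by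
        rw [abs_of_nonneg hsum_nonneg]; exact hsum_le
      linarith
    have habs1 : |1 / μ x| ≤ 1 / μ₀ := by
      rw [abs_of_nonneg (by positivity)]; exact hμinv
    calc |1 / μ x| * |(1/2) * G x * h (φ m x) + ∑ j ∈ Finset.univ.erase i0, (D m j x) ^ 2|
        ≤ (1 / μ₀) * ((1/2) * L * H + n * C ^ 2) :=
          mul_le_mul habs1 habs2 (abs_nonneg _) (by positivity)
    _ = A := rfl
  have hbound_b : ∀ m, ∀ x ∈ Ω, |b m x| ≤ (1 / μ₀) * (α₁ * (C + Cρ * m) ^ 2) := by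
    intro m x hx
    obtain ⟨hμx, hμinv⟩ := hmu_inv x hx
    obtain ⟨hα1, hα2⟩ := hαbound x hx
    rw [hbdef]
    simp only
    rw [abs_mul, abs_mul]
    have e1 : |1 / μ x| ≤ 1 / μ₀ := by
      rw [abs_of_nonneg (by positivity)]; exact hμinv
    have e2 : |1 - α x| ≤ α₁ := by
      rw [abs_of_nonpos (by linarith)]; linarith
    have e3 : |(D m i0 x) ^ 2| ≤ (C + Cρ * m) ^ 2 := by
      rw [abs_of_nonneg (sq_nonneg _)]
      exact sq_le_sq' (by linarith [abs_le.mp (hD0 m x)]) (abs_le.mp (hD0 m x)).2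
    have e4 : |1 - α x| * |(D m i0 x) ^ 2| ≤ α₁ * (C + Cρ * m) ^ 2 :=
      mul_le_mul e2 e3 (abs_nonneg _) hα₁.le
    exact mul_le_mul e1 e4 (by positivity) (by positivity)
  have hint_a : ∀ m, IntegrableOn (a m) Ω volume :=
    fun m => hIntHelp (a m) A (hmeas_a m) (hbound_a m)
  have hint_b : ∀ m, IntegrableOn (b m) Ω volume :=
    fun m => hIntHelp (b m) _ (hmeas_b m) (hbound_b m)
  -- split the energy
  have hsplit : ∀ m, E m = (∫ x in Ω, a m x) + (∫ x in Ω, b m x) := by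
    intro m
    rw [hE m, ← integral_add (hint_a m) (hint_b m)]
    apply integral_congr_ae
    apply ae_of_all
    intro x
    show (1 / μ x) * _ = a m x + b m x
    rw [hadef, hbdef]
    simp only
    show (1 / μ x) * ((1 / 2) * G x * h (φ m x) + (1 - α x) * (D m i0 x) ^ 2
      + ∑ j ∈ Finset.univ.erase i0, (D m j x) ^ 2) = _
    ring

  -- ball geometry
  haveI hnontriv : Nontrivial (EuclideanSpace ℝ (Fin n)) := by
    refine ⟨0, EuclideanSpace.single i0 1, fun hc => ?_⟩
    have h1 := congrArg (fun z : EuclideanSpace ℝ (Fin n) => z i0) hc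
    simp only at h1
    rw [hsingle_eq] at h1
    have h0 : (0 : EuclideanSpace ℝ (Fin n)) i0 = 0 := rfl
    rw [h0] at h1
    exact zero_ne_one h1
  have hsph : volume (Metric.sphere p R) = 0 := Measure.addHaar_sphere volume p R
  have hcb_meas : MeasurableSet (Metric.closedBall p R) := measurableSet_closedBall
  have hcbvol_lt : volume (Metric.closedBall p R) < ⊤ := measure_closedBall_lt_top
  set vol : ℝ := (volume (Metric.closedBall p R)).toReal with hvoldef
  have hvolpos : 0 < vol :=
    ENNReal.toReal_pos (Metric.measure_closedBall_pos volume p hR).ne' hcbvol_lt.ne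
  -- b is nonpositive on Ω
  have hb_nonpos : ∀ m, ∀ x ∈ Ω, b m x ≤ 0 := by
    intro m x hx
    obtain ⟨hμx, _⟩ := hmu_inv x hx
    have hα1 := (hαbound x hx).1
    have h1 : (1 - α x) * (D m i0 x) ^ 2 ≤ 0 :=
      mul_nonpos_of_nonpos_of_nonneg (by linarith) (sq_nonneg _)
    have h0 : 0 ≤ 1 / μ x := by positivity
    show (1 / μ x) * ((1 - α x) * (D m i0 x) ^ 2) ≤ 0
    nlinarith
  have hb_ball_mono : ∀ m, (∫ x in Ω, b m x) ≤ ∫ x in Metric.closedBall p R, b m x := by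
    intro m
    have hneg : (∫ x in Metric.closedBall p R, -(b m x)) ≤ ∫ x in Ω, -(b m x) := by
      apply setIntegral_mono_set ((hint_b m).neg)
      · rw [Filter.EventuallyLE, ae_restrict_iff' hΩmeas]
        refine ae_of_all _ fun x hx => ?_
        simp only [Pi.neg_apply, Pi.zero_apply, neg_nonneg]
        exact hb_nonpos m x hx
      · exact HasSubset.Subset.eventuallyLE hball
    rw [integral_neg, integral_neg] at hneg
    linarith
  -- comparison with the explicit cosine on the ball
  set g : ℕ → EuclideanSpace ℝ (Fin n) → ℝ :=
    fun m x => (-(ε / μ₁) * (m : ℝ) ^ 2) * (Real.cos (m * x i0)) ^ 2 with hgdef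
  have hcos_cont : ∀ m : ℕ, Continuous fun x : EuclideanSpace ℝ (Fin n) =>
      Real.cos ((m : ℝ) * x i0) :=
    fun m => Real.continuous_cos.comp
      (continuous_const.mul (EuclideanSpace.proj (𝕜 := ℝ) i0).continuous)
  have hgint : ∀ m, IntegrableOn (g m) (Metric.closedBall p R) volume := by
    intro m
    exact (continuous_const.mul ((hcos_cont m).pow 2)).continuousOn.integrableOn_compact
      (isCompact_closedBall _ _)
  have hbg : ∀ (m : ℕ), ∀ x ∈ Metric.ball p R, b m x ≤ g m x := by
    intro m x hx
    have hxcb : x ∈ Metric.closedBall p R := Metric.ball_subset_closedBall hx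
    have hxΩ : x ∈ Ω := hball hxcb
    obtain ⟨hμx, _⟩ := hmu_inv x hxΩ
    have hμle := (hμbound x hxΩ).2
    have hαx := hαball x hxcb
    -- on the open ball the cut-off is locally 1
    have hev : ρ =ᶠ[𝓝 x] fun _ => (1 : ℝ) :=
      Filter.eventually_of_mem (Metric.isOpen_ball.mem_nhds hx)
        fun y hy => hρ1 y (Metric.ball_subset_closedBall hy)
    have hfd : fderiv ℝ ρ x = 0 := by
      rw [hev.fderiv_eq]
      exact fderiv_const_apply 1
    have hDval : D m i0 x = (m : ℝ) * Real.cos (m * x i0) := by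
      rw [hDeq, hfd, hsingle_eq, hρ1 x hxcb]
      simp
    have hcoeff : (1 - α x) / μ x ≤ (-ε) / μ₁ := by
      rw [div_le_div_iff₀ hμx hμ₁]
      have f1 : (1 - α x) * μ₁ ≤ (-ε) * μ₁ :=
        mul_le_mul_of_nonneg_right (show 1 - α x ≤ -ε by linarith) hμ₁.le
      have f2 : ε * μ x ≤ ε * μ₁ := mul_le_mul_of_nonneg_left hμle hε.le
      linarith
    have hsq : (0:ℝ) ≤ (m : ℝ) ^ 2 * (Real.cos (m * x i0)) ^ 2 := by positivity
    have hmul := mul_le_mul_of_nonneg_right hcoeff hsq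
    calc b m x = ((1 - α x) / μ x) * ((m : ℝ) ^ 2 * (Real.cos (m * x i0)) ^ 2) := by
          show (1 / μ x) * ((1 - α x) * (D m i0 x) ^ 2) = _
          rw [hDval]; ring
    _ ≤ ((-ε) / μ₁) * ((m : ℝ) ^ 2 * (Real.cos (m * x i0)) ^ 2) := hmul
    _ = g m x := by show _ = (-(ε / μ₁) * (m : ℝ) ^ 2) * (Real.cos (m * x i0)) ^ 2; ring
  have hbg_ae : ∀ m, (fun x => b m x) ≤ᵐ[volume.restrict (Metric.closedBall p R)] g m := by
    intro m
    have h1 : ∀ᵐ x ∂volume.restrict (Metric.closedBall p R), x ∉ Metric.sphere p R :=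
      ae_restrict_of_ae (measure_eq_zero_iff_ae_notMem.mp hsph)
    have h2 : ∀ᵐ x ∂volume.restrict (Metric.closedBall p R), x ∈ Metric.closedBall p R :=
      ae_restrict_mem hcb_meas
    filter_upwards [h1, h2] with x hx1 hx2
    refine hbg m x ?_
    rw [Metric.mem_ball]
    rcases lt_or_eq_of_le (Metric.mem_closedBall.mp hx2) with hlt | heq
    · exact hlt
    · exact absurd (Metric.mem_sphere.mpr heq) hx1
  have hb_le_g : ∀ m, (∫ x in Metric.closedBall p R, b m x)
      ≤ ∫ x in Metric.closedBall p R, g m x :=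
    fun m => setIntegral_mono_ae_restrict ((hint_b m).mono_set hball) (hgint m) (hbg_ae m)
  -- the cosine-squared integral
  have hIcos_eq : ∀ m : ℕ, (∫ x in Metric.closedBall p R, (Real.cos ((m:ℝ) * x i0)) ^ 2)
      = vol / 2 + (1 / 2) * ∫ x in Metric.closedBall p R, Real.cos (2 * (m:ℝ) * x i0) := by
    intro m
    have hpt : ∀ x : EuclideanSpace ℝ (Fin n),
        (Real.cos ((m:ℝ) * x i0)) ^ 2 = 1 / 2 + Real.cos (2 * (m:ℝ) * x i0) / 2 := by
      intro x
      rw [Real.cos_sq, ← mul_assoc]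
    simp_rw [hpt]
    have hcint : IntegrableOn
        (fun x : EuclideanSpace ℝ (Fin n) => Real.cos (2 * (m:ℝ) * x i0) / 2)
        (Metric.closedBall p R) volume := by
      have hccont : Continuous (fun x : EuclideanSpace ℝ (Fin n) =>
          Real.cos (2 * (m:ℝ) * x i0)) := Real.continuous_cos.comp
        (continuous_const.mul (EuclideanSpace.proj (𝕜 := ℝ) i0).continuous)
      exact (hccont.div_const 2).continuousOn.integrableOn_compact
        (isCompact_closedBall _ _)
    rw [integral_add (integrableOn_const (C := (1/2:ℝ)) hcbvol_lt.ne) hcint,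
      setIntegral_const, integral_div, smul_eq_mul, measureReal_def]
    ring
    -- eventual lower bound on the cosine-squared integral
  have hJ := aux_cos_tendsto p R i0
  have hJev : ∀ᶠ m : ℕ in atTop,
      |∫ x in Metric.closedBall p R, Real.cos (2 * (m:ℝ) * x i0)| < vol / 2 := by
    have := (Metric.tendsto_nhds.mp hJ) (vol / 2) (by positivity)
    filter_upwards [this] with m hm
    simpa [Real.dist_eq] using hm
  obtain ⟨M₀, hM₀⟩ := eventually_atTop.mp hJev
  have hIcos_ge : ∀ m : ℕ, m ≥ M₀ →
      vol / 4 ≤ ∫ x in Metric.closedBall p R, (Real.cos ((m:ℝ) * x i0)) ^ 2 := by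
    intro m hm
    have habs := abs_lt.mp (hM₀ m hm)
    rw [hIcos_eq m]
    linarith [habs.1]
  set c : ℝ := (ε / μ₁) * (vol / 4) with hcdef
  have hcpos : 0 < c := by positivity
  set K : ℝ := A * (volume Ω).toReal with hKdef
  have hEb : ∀ m : ℕ, m ≥ M₀ → E m ≤ K - c * (m : ℝ) ^ 2 := by
    intro m hm
    have hIa : |∫ x in Ω, a m x| ≤ K := by
      have := MeasureTheory.norm_setIntegral_le_of_norm_le_const hΩvol (f := a m) (C := A)
        (fun x hx => hbound_a m x hx)
      simpa [Real.norm_eq_abs, measureReal_def] using this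
    have hg_eval : (∫ x in Metric.closedBall p R, g m x)
        = (-(ε / μ₁) * (m : ℝ) ^ 2) * ∫ x in Metric.closedBall p R,
            (Real.cos ((m:ℝ) * x i0)) ^ 2 := by
      simp only [hgdef]
      exact integral_const_mul _ _
    have hcoeff_nonpos : (-(ε / μ₁) * (m : ℝ) ^ 2) ≤ 0 := by
      have : 0 ≤ (ε / μ₁) * (m:ℝ) ^ 2 := by positivity
      linarith
    have hgle : (∫ x in Metric.closedBall p R, g m x) ≤ -(c * (m:ℝ) ^ 2) := by
      rw [hg_eval]
      have h1 := mul_le_mul_of_nonpos_left (hIcos_ge m hm) hcoeff_nonpos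
      calc (-(ε / μ₁) * (m : ℝ) ^ 2)
            * ∫ x in Metric.closedBall p R, (Real.cos ((m:ℝ) * x i0)) ^ 2
          ≤ (-(ε / μ₁) * (m : ℝ) ^ 2) * (vol / 4) := h1
      _ = -(c * (m:ℝ) ^ 2) := by rw [hcdef]; ring
    have hs := hsplit m
    have habs2 := (abs_le.mp hIa).2
    linarith [hb_ball_mono m, hb_le_g m]
  have hfinal : ∀ S : ℝ, ∃ M : ℕ, ∀ m ≥ M, E m < S := by
    intro S
    have h1 : Tendsto (fun m : ℕ => ((m:ℝ)) ^ 2) atTop atTop :=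
      (tendsto_pow_atTop two_ne_zero).comp tendsto_natCast_atTop_atTop
    have h2 : Tendsto (fun m : ℕ => c * ((m:ℝ)) ^ 2) atTop atTop := h1.const_mul_atTop hcpos
    have h3 : Tendsto (fun m : ℕ => K - c * ((m:ℝ)) ^ 2) atTop atBot := by
      simp_rw [sub_eq_add_neg]
      exact tendsto_atBot_add_const_left _ K (tendsto_neg_atTop_atBot.comp h2)
    have hev2 : ∀ᶠ m : ℕ in atTop, E m < S := by
      filter_upwards [h3.eventually (eventually_lt_atBot S), eventually_ge_atTop M₀]
        with m hlt hge
      exact lt_of_le_of_lt (hEb m hge) hlt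
    exact eventually_atTop.mp hev2
  refine ⟨hfinal, ?_⟩
  obtain ⟨M, hM⟩ := hfinal (-1)
  exact ⟨M, lt_trans (hM M le_rfl) (by norm_num)⟩
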